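/- Let ρ : ℝ² → ℝ be twice continuously differentiable and let L₁₂₁, L₁₂₂ : ℝ² → ℝ be continuously differentiable functions satisfying at every point the two equations (E1) −e^{2ρ}∂₁∂₂ρ + 4L₁₂₁∂₂ρ − 4L₁₂₂∂₁ρ − 2∂₂L₁₂₁ + 2∂₁L₁₂₂ = 0 and (E2) 2L₁₂₁∂₂ρ + 2L₁₂₂∂₁ρ − ∂₂L₁₂₁ − ∂₁L₁₂₂ = 0. Then the function (x¹,x²) ↦ e^{−2ρ(x¹,x²)} L₁₂₁(x¹,x²) + (1/4) ∂₁ρ(x¹,x²) has vanishing partial derivative with respect to x² at every point of ℝ²; equivalently, e^{−2ρ} L₁₂₁ + (1/4) ∂₁ρ depends only on x¹. -/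

import Mathlib

/-!
Adding (E1) to twice (E2) eliminates `L₁₂₂` and leaves
`∂₂L₁₂₁ = 2 L₁₂₁ ∂₂ρ - (1/4) e^{2ρ} ∂₁∂₂ρ`. Hence `∂₂(e^{-2ρ} L₁₂₁) = -(1/4) ∂₁∂₂ρ`, which cancels
against `∂₂((1/4) ∂₁ρ)` by the symmetry of the second derivative of the `C²` function `ρ`.
-/

/-- Partial derivative of `f : ℝ² → ℝ` with respect to the `i`-th coordinate,
taken as the derivative along the corresponding coordinate line. -/
noncomputable def pd (i : Fin 2) (f : (Fin 2 → ℝ) → ℝ) : (Fin 2 → ℝ) → ℝ :=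
  fun x => deriv (fun t => f (Function.update x i t)) (x i)

section PartialDeriv

variable {f g : (Fin 2 → ℝ) → ℝ} {x : Fin 2 → ℝ} (i : Fin 2)

theorem HasFDerivAt.pd_eq {f' : (Fin 2 → ℝ) →L[ℝ] ℝ} (hf : HasFDerivAt f f' x) :
    pd i f x = f' (Pi.single i 1) := by
  rw [← Function.update_eq_self i x] at hf
  exact (hf.comp_hasDerivAt (x i) (hasDerivAt_update x i (x i))).deriv

theorem pd_add (hf : DifferentiableAt ℝ f x) (hg : DifferentiableAt ℝ g x) :
    pd i (fun y => f y + g y) x = pd i f x + pd i g x := by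
  rw [(hf.hasFDerivAt.fun_add hg.hasFDerivAt).pd_eq, hf.hasFDerivAt.pd_eq, hg.hasFDerivAt.pd_eq]
  rfl

theorem pd_mul (hf : DifferentiableAt ℝ f x) (hg : DifferentiableAt ℝ g x) :
    pd i (fun y => f y * g y) x = f x * pd i g x + g x * pd i f x := by
  rw [(hf.hasFDerivAt.fun_mul hg.hasFDerivAt).pd_eq, hf.hasFDerivAt.pd_eq, hg.hasFDerivAt.pd_eq]
  simp

theorem pd_exp (hf : DifferentiableAt ℝ f x) :
    pd i (fun y => Real.exp (f y)) x = Real.exp (f x) * pd i f x := by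
  rw [hf.hasFDerivAt.exp.pd_eq, hf.hasFDerivAt.pd_eq]
  simp

theorem pd_const_mul (c : ℝ) : pd i (fun y => c * f y) x = c * pd i f x := by
  simp only [pd, deriv_const_mul_field']

theorem pd_neg : pd i (fun y => -f y) x = -pd i f x :=
  congrFun (deriv.neg' (f := fun t => f (Function.update x i t))) (x i)

theorem pd_eq_fderiv_apply (hf : Differentiable ℝ f) :
    pd i f = fun y => fderiv ℝ f y (Pi.single i 1) :=
  funext fun y => (hf y).hasFDerivAt.pd_eq i

theorem ContDiff.contDiff_pd {n : WithTop ℕ∞} (hf : ContDiff ℝ (n + 1) f) : ContDiff ℝ n (pd i f) := by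
  rw [pd_eq_fderiv_apply i (hf.differentiable (by simp))]
  exact (hf.fderiv_right le_rfl).clm_apply contDiff_const

theorem ContDiff.pd_pd_eq_fderiv_fderiv (hf : ContDiff ℝ 2 f) (j : Fin 2) :
    pd i (pd j f) x = fderiv ℝ (fderiv ℝ f) x (Pi.single i 1) (Pi.single j 1) := by
  have hf' : Differentiable ℝ (fderiv ℝ f) :=
    (hf.fderiv_right (m := 1) le_rfl).differentiable one_ne_zero
  rw [pd_eq_fderiv_apply j (hf.differentiable two_ne_zero)]
  exact ((ContinuousLinearMap.apply ℝ ℝ (Pi.single j 1)).hasFDerivAt.comp x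
    (hf' x).hasFDerivAt).pd_eq i

theorem ContDiff.pd_pd_comm (hf : ContDiff ℝ 2 f) (j : Fin 2) :
    pd i (pd j f) x = pd j (pd i f) x := by
  rw [hf.pd_pd_eq_fderiv_fderiv, hf.pd_pd_eq_fderiv_fderiv,
    (hf.contDiffAt.isSymmSndFDerivAt (by simp)).eq]

end PartialDeriv

/-- Coordinate `xⁱ` corresponds to `i - 1 : Fin 2`. -/
theorem riemann_lanczos_2d_L121_profile_general
    (ρ L121 L122 : (Fin 2 → ℝ) → ℝ)
    (hρ : ContDiff ℝ 2 ρ) (hL121 : ContDiff ℝ 1 L121)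
    (hE1 : ∀ x : Fin 2 → ℝ,
      -Real.exp (2 * ρ x) * pd 0 (pd 1 ρ) x + 4 * L121 x * pd 1 ρ x
        - 4 * L122 x * pd 0 ρ x - 2 * pd 1 L121 x + 2 * pd 0 L122 x = 0)
    (hE2 : ∀ x : Fin 2 → ℝ,
      2 * L121 x * pd 1 ρ x + 2 * L122 x * pd 0 ρ x
        - pd 1 L121 x - pd 0 L122 x = 0) :
    ∀ x : Fin 2 → ℝ,
      pd 1 (fun y => Real.exp (-(2 * ρ y)) * L121 y + (1/4) * pd 0 ρ y) x = 0 := by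
  intro x
  have hρ' : Differentiable ℝ ρ := hρ.differentiable two_ne_zero
  have hL121' : Differentiable ℝ L121 := hL121.differentiable one_ne_zero
  have hpd0ρ : Differentiable ℝ (pd 0 ρ) := (hρ.contDiff_pd (n := 1) 0).differentiable one_ne_zero
  have hL121_eq : pd 1 L121 x
      = 2 * L121 x * pd 1 ρ x - Real.exp (2 * ρ x) / 4 * pd 0 (pd 1 ρ) x := by
    linarith [hE1 x, hE2 x]
  rw [pd_add 1 (by fun_prop) (by fun_prop), pd_mul 1 (by fun_prop) (by fun_prop),
    pd_exp 1 (by fun_prop), pd_neg, pd_const_mul, pd_const_mul, hL121_eq, hρ.pd_pd_comm 1 0]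
  have hexp : Real.exp (-(2 * ρ x)) * Real.exp (2 * ρ x) = 1 := by
    rw [← Real.exp_add, neg_add_cancel, Real.exp_zero]
  linear_combination (-(1 / 4) * pd 0 (pd 1 ρ) x) * hexp

/-- If `(L₁₂₁, L₁₂₂)` solves the 2-dimensional Riemann-Lanczos system (E1), (E2)
(with the differential gauge condition) for a C² conformal factor `ρ`, then
`e^{−2ρ} L₁₂₁ + (1/4) ∂₁ρ` has vanishing `x²`-partial derivative everywhere,
i.e. it depends only on `x¹`.  Coordinate `xⁱ` corresponds to `i - 1 : Fin 2`. -/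
theorem riemann_lanczos_2d_L121_profile
    (ρ L121 L122 : (Fin 2 → ℝ) → ℝ)
    (hρ : ContDiff ℝ 2 ρ) (hL121 : ContDiff ℝ 1 L121) (hL122 : ContDiff ℝ 1 L122)
    (hE1 : ∀ x : Fin 2 → ℝ,
      -Real.exp (2 * ρ x) * pd 0 (pd 1 ρ) x + 4 * L121 x * pd 1 ρ x
        - 4 * L122 x * pd 0 ρ x - 2 * pd 1 L121 x + 2 * pd 0 L122 x = 0)
    (hE2 : ∀ x : Fin 2 → ℝ,
      2 * L121 x * pd 1 ρ x + 2 * L122 x * pd 0 ρ x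
        - pd 1 L121 x - pd 0 L122 x = 0) :
    ∀ x : Fin 2 → ℝ,
      pd 1 (fun y => Real.exp (-(2 * ρ y)) * L121 y + (1/4) * pd 0 ρ y) x = 0 :=
  riemann_lanczos_2d_L121_profile_general ρ L121 L122 hρ hL121 hE1 hE2
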